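/- Let (K,v) be a henselian valued field with algebraic closure K̄ and unique extension of v to K̄ (still denoted v). For a monic irreducible polynomial F ∈ K[x] and a root θ ∈ K̄ of F, the function v_F(f) = v(f(θ)) for f ∈ K[x] is independent of the choice of the root θ, and defines a valuation on K[x] extending v with support the ideal generated by F. -/

import Mathlib

open Polynomial

section Preamble

variable {Λ : Type*} [AddCommGroup Λ] [LinearOrder Λ] [IsOrderedAddMonoid Λ]

/-- A (Krull) valuation on a commutative ring, written additively, with value `⊤` at `0`. -/
def IsVal {R : Type*} [CommRing R] (μ : R → WithTop Λ) : Prop :=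
  μ 0 = ⊤ ∧ μ 1 = 0 ∧ (∀ a b, μ (a * b) = μ a + μ b) ∧ ∀ a b, min (μ a) (μ b) ≤ μ (a + b)

variable {K : Type*} [Field K]

/-- `μ` is a valuation on `K[x]` whose restriction to `K` is `v`. -/
def ExtendsVal (v : K → WithTop Λ) (μ : Polynomial K → WithTop Λ) : Prop :=
  ∀ a : K, μ (Polynomial.C a) = v a

/-- `a ∼_μ b`: the initial terms of `a` and `b` in the graded algebra of `μ` coincide. -/
def MuEquiv (μ : Polynomial K → WithTop Λ) (a b : Polynomial K) : Prop :=
  (μ a = μ b ∧ μ a < μ (a - b)) ∨ (μ a = ⊤ ∧ μ b = ⊤)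

/-- `h ∣_μ g` : the initial term of `h` divides the initial term of `g` in the
graded algebra `G_μ`. -/
def MuDvd (μ : Polynomial K → WithTop Λ) (h g : Polynomial K) : Prop :=
  ∃ c, MuEquiv μ (h * c) g

/-- `g` is `μ`-minimal: `g ∤_μ f` for all nonzero `f` of degree smaller than `deg g`. -/
def MuMinimal (μ : Polynomial K → WithTop Λ) (g : Polynomial K) : Prop :=
  ∀ f : Polynomial K, f ≠ 0 → f.degree < g.degree → ¬ MuDvd μ g f

/-- `g` is `μ`-irreducible: the principal ideal of `G_μ` generated by the initial term of `g`
is a nonzero prime ideal. -/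
def MuIrreducible (μ : Polynomial K → WithTop Λ) (g : Polynomial K) : Prop :=
  μ g ≠ ⊤ ∧ ¬ MuDvd μ g 1 ∧ ∀ a b : Polynomial K, MuDvd μ g (a * b) → MuDvd μ g a ∨ MuDvd μ g b

/-- A (MacLane–Vaquié) key polynomial for `μ`: monic, `μ`-minimal and `μ`-irreducible. -/
def IsKeyPol (μ : Polynomial K → WithTop Λ) (φ : Polynomial K) : Prop :=
  φ.Monic ∧ MuMinimal μ φ ∧ MuIrreducible μ φ

/-- A key polynomial for `μ` of minimal degree. -/
def MinKeyPol (μ : Polynomial K → WithTop Λ) (φ : Polynomial K) : Prop :=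
  IsKeyPol μ φ ∧ ∀ ψ : Polynomial K, IsKeyPol μ ψ → φ.degree ≤ ψ.degree

/-- The coefficients of the `g`-adic expansion `f = ∑ a_s g^s`, `deg a_s < deg g`. -/
noncomputable def adicCoeff (g : Polynomial K) : Polynomial K → ℕ → Polynomial K
  | f, 0 => f %ₘ g
  | f, (s + 1) => adicCoeff g (f /ₘ g) s

/-- The truncation `μ_g` of `μ` : `μ_g (∑ a_s g^s) = min_s μ (a_s g^s)`. -/
noncomputable def truncVal (μ : Polynomial K → WithTop Λ) (g f : Polynomial K) : WithTop Λ :=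
  (Finset.range (f.natDegree + 1)).inf fun s => μ (adicCoeff g f s * g ^ s)

/-- The augmented valuation `[μ; φ, γ]`, acting on `φ`-expansions by
`ν(∑ a_s φ^s) = min_s (μ(a_s) + s γ)`. -/
noncomputable def augVal (μ : Polynomial K → WithTop Λ) (φ : Polynomial K) (γ : WithTop Λ)
    (f : Polynomial K) : WithTop Λ :=
  (Finset.range (f.natDegree + 1)).inf fun s => μ (adicCoeff φ f s) + s • γ

end Preamble

/-!
Any two roots `θ, θ'` of the irreducible polynomial `F` are conjugate by some `σ ∈ Gal(K̄/K)`.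
The valuation `vbar ∘ σ` again extends `v`, so it equals `vbar` by henselianity; hence
`vbar (f θ') = vbar (σ (f θ)) = vbar (f θ)`. The function `f ↦ vbar (f θ)` is a valuation
because it is `vbar` composed with the ring map `aeval θ`, and since `vbar` vanishes only at
`0` on the field `K̄`, its support is the kernel of `aeval θ`, generated by `minpoly K θ = F`.
-/

section IsVal

variable {Λ : Type*} [AddCommGroup Λ] [LinearOrder Λ]

theorem IsVal.comp_ringHom {R S : Type*} [CommRing R] [CommRing S] {μ : S → WithTop Λ}
    (hμ : IsVal μ) (φ : R →+* S) : IsVal fun x => μ (φ x) := by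
  obtain ⟨h0, h1, hmul, hadd⟩ := hμ
  exact ⟨by simp only [map_zero, h0], by simp only [map_one, h1],
    fun a b => by simp only [map_mul, hmul], fun a b => by simpa only [map_add] using hadd _ _⟩

theorem IsVal.eq_top_iff [IsOrderedAddMonoid Λ] {L : Type*} [Field L] {μ : L → WithTop Λ}
    (hμ : IsVal μ) {x : L} : μ x = ⊤ ↔ x = 0 := by
  obtain ⟨h0, h1, hmul, -⟩ := hμ
  refine ⟨fun hx => by_contra fun hx0 => ?_, fun hx => hx ▸ h0⟩
  have hinv := hmul x x⁻¹
  rw [mul_inv_cancel₀ hx0, h1, hx, top_add] at hinv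
  exact WithTop.zero_ne_top hinv

theorem apply_algEquiv_eq_of_extension_unique {K L : Type*} [Field K] [CommRing L] [Algebra K L]
    {v : K → WithTop Λ} {vbar : L → WithTop Λ} (hvbar : IsVal vbar)
    (hextbar : ∀ a : K, vbar (algebraMap K L a) = v a)
    (hunique : ∀ w : L → WithTop Λ, IsVal w → (∀ a : K, w (algebraMap K L a) = v a) → w = vbar)
    (σ : L ≃ₐ[K] L) (x : L) : vbar (σ x) = vbar x :=
  congrFun (hunique _ (hvbar.comp_ringHom (σ : L →+* L))
    fun a => by simpa using hextbar a) x

end IsVal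

theorem exists_algEquiv_apply_eq_of_aeval_eq_zero {K L : Type*} [Field K] [Field L] [Algebra K L]
    [Normal K L] {F : K[X]} (hFm : F.Monic) (hFirr : Irreducible F) {θ θ' : L}
    (hθ : aeval θ F = 0) (hθ' : aeval θ' F = 0) : ∃ σ : L ≃ₐ[K] L, σ θ = θ' :=
  (Normal.minpoly_eq_iff_mem_orbit L).mp <|
    (minpoly.eq_of_irreducible_of_monic hFirr hθ' hFm).symm.trans
      (minpoly.eq_of_irreducible_of_monic hFirr hθ hFm)

theorem vF_well_defined_general {K : Type*} [Field K] {Λ : Type*} [AddCommGroup Λ] [LinearOrder Λ] [IsOrderedAddMonoid Λ]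
    (v : K → WithTop Λ)
    (vbar : AlgebraicClosure K → WithTop Λ) (hvbar : IsVal vbar)
    (hextbar : ∀ a : K, vbar (algebraMap K (AlgebraicClosure K) a) = v a)
    (hhens : ∀ w : AlgebraicClosure K → WithTop Λ, IsVal w →
      (∀ a : K, w (algebraMap K (AlgebraicClosure K) a) = v a) → w = vbar)
    (F : Polynomial K) (hFm : F.Monic) (hFirr : Irreducible F)
    (θ : AlgebraicClosure K) (hθ : Polynomial.aeval θ F = 0) :
    (∀ θ' : AlgebraicClosure K, Polynomial.aeval θ' F = 0 →
        ∀ f : Polynomial K, vbar (Polynomial.aeval θ f) = vbar (Polynomial.aeval θ' f)) ∧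
    IsVal (fun f : Polynomial K => vbar (Polynomial.aeval θ f)) ∧
    ExtendsVal v (fun f : Polynomial K => vbar (Polynomial.aeval θ f)) ∧
    ∀ f : Polynomial K, vbar (Polynomial.aeval θ f) = ⊤ ↔ F ∣ f := by
  refine ⟨fun θ' hθ' f => ?_, (hvbar.comp_ringHom (aeval (R := K) θ).toRingHom :),
    fun a => by simpa using hextbar a, fun f => ?_⟩
  · obtain ⟨σ, rfl⟩ := exists_algEquiv_apply_eq_of_aeval_eq_zero hFm hFirr hθ hθ'
    rw [aeval_algEquiv, AlgHom.comp_apply, AlgEquiv.coe_toAlgHom,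
      apply_algEquiv_eq_of_extension_unique hvbar hextbar hhens]
  · rw [hvbar.eq_top_iff, ← minpoly.dvd_iff, ← minpoly.eq_of_irreducible_of_monic hFirr hθ hFm]

/-- over a henselian field, `v_F(f) = v(f(θ))` is independent of the chosen root
`θ` of `F`, and defines a valuation on `K[x]` extending `v` with support `(F)`. -/
theorem vF_well_defined {K : Type*} [Field K] {Λ : Type*} [AddCommGroup Λ] [LinearOrder Λ] [IsOrderedAddMonoid Λ]
    (v : K → WithTop Λ) (hv : IsVal v)
    (vbar : AlgebraicClosure K → WithTop Λ) (hvbar : IsVal vbar)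
    (hextbar : ∀ a : K, vbar (algebraMap K (AlgebraicClosure K) a) = v a)
    (hhens : ∀ w : AlgebraicClosure K → WithTop Λ, IsVal w →
      (∀ a : K, w (algebraMap K (AlgebraicClosure K) a) = v a) → w = vbar)
    (F : Polynomial K) (hFm : F.Monic) (hFirr : Irreducible F)
    (θ : AlgebraicClosure K) (hθ : Polynomial.aeval θ F = 0) :
    (∀ θ' : AlgebraicClosure K, Polynomial.aeval θ' F = 0 →
        ∀ f : Polynomial K, vbar (Polynomial.aeval θ f) = vbar (Polynomial.aeval θ' f)) ∧
    IsVal (fun f : Polynomial K => vbar (Polynomial.aeval θ f)) ∧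
    ExtendsVal v (fun f : Polynomial K => vbar (Polynomial.aeval θ f)) ∧
    ∀ f : Polynomial K, vbar (Polynomial.aeval θ f) = ⊤ ↔ F ∣ f :=
  vF_well_defined_general v vbar hvbar hextbar hhens F hFm hFirr θ hθ
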